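/- Let G be a connected simple graph with maximum degree 3, φ a δ-minimum edge-colouring of G, and e = uv an edge coloured δ with d(u) = 3 and d(v) = 2, where u is incident to edges coloured α and β and v is incident to an edge coloured γ. Then e belongs to both A_φ ∩ B_φ: there is an alternating path of φ(α,γ) joining u and v and also an alternating path of φ(β,γ) joining u and v. -/

import Mathlib

open SimpleGraph

namespace Parsimonious

/-- `φ` is a proper edge colouring of the set `F` of edges: two distinct edges of `F`
sharing a vertex receive different colours. -/
def ProperOn {V α : Type*} (F : Set (Sym2 V)) (φ : Sym2 V → α) : Prop :=
  ∀ ⦃e₁⦄, e₁ ∈ F → ∀ ⦃e₂⦄, e₂ ∈ F → e₁ ≠ e₂ → (∃ v, v ∈ e₁ ∧ v ∈ e₂) → φ e₁ ≠ φ e₂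

/-- `G` admits a proper edge colouring with `k` colours. -/
def EdgeColorable {V : Type*} (G : SimpleGraph V) (k : ℕ) : Prop :=
  ∃ φ : Sym2 V → Fin k, ProperOn G.edgeSet φ

/-- `γ(G)`: the largest fraction of the edges of `G` spanning a properly
3-edge-colourable subgraph. -/
noncomputable def gamma {V : Type*} (G : SimpleGraph V) : ℝ :=
  sSup {r : ℝ | ∃ F : Set (Sym2 V), F ⊆ G.edgeSet ∧
    (∃ φ : Sym2 V → Fin 3, ProperOn F φ) ∧
    r = (F.ncard : ℝ) / (G.edgeSet.ncard : ℝ)}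

/-- `s(G)`: the minimum number of edges coloured `δ` (colour `3`) over all proper
edge colourings of `G` with the four colours `α, β, γ, δ` (= `0, 1, 2, 3`). -/
noncomputable def sColor {V : Type*} (G : SimpleGraph V) : ℕ :=
  sInf {k : ℕ | ∃ φ : Sym2 V → Fin 4, ProperOn G.edgeSet φ ∧
    k = {e ∈ G.edgeSet | φ e = 3}.ncard}

/-- `φ` is a δ-minimum edge colouring of `G`. -/
def IsDeltaMin {V : Type*} (G : SimpleGraph V) (φ : Sym2 V → Fin 4) : Prop :=
  ProperOn G.edgeSet φ ∧ {e ∈ G.edgeSet | φ e = 3}.ncard = sColor G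

/-- The odd girth of `G`: the length of a shortest odd cycle. -/
noncomputable def oddGirth {V : Type*} (G : SimpleGraph V) : ℕ :=
  sInf {n : ℕ | Odd n ∧ ∃ (v : V) (c : G.Walk v v), c.IsCycle ∧ c.length = n}

/-- The Petersen graph, i.e. the Kneser graph `K(5,2)`. -/
def petersen : SimpleGraph {s : Finset (Fin 5) // s.card = 2} where
  Adj a b := Disjoint a.1 b.1
  symm := ⟨fun _ _ h => h.symm⟩
  loopless := ⟨fun a h => by
    have h2 : a.1 = ∅ := disjoint_self.mp h
    have hc := a.2
    rw [show a.1 = ∅ from h2] at hc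
    simp at hc⟩

/-- `φ(x,y)`: the subgraph of `G` spanned by the edges coloured `x` or `y`. -/
def twoColour {V : Type*} (G : SimpleGraph V) (φ : Sym2 V → Fin 4) (x y : Fin 4) :
    SimpleGraph V :=
  SimpleGraph.fromEdgeSet {e | e ∈ G.edgeSet ∧ (φ e = x ∨ φ e = y)}

/-- An edge is in `A_φ` when it is coloured `δ` and its ends are joined by a path
of `φ(α,β)`. -/
def InA {V : Type*} (G : SimpleGraph V) (φ : Sym2 V → Fin 4) (e : Sym2 V) : Prop :=
  e ∈ G.edgeSet ∧ φ e = 3 ∧ ∀ u v : V, e = s(u, v) → (twoColour G φ 0 1).Reachable u v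

/-- An edge is in `B_φ` when it is coloured `δ` and its ends are joined by a path
of `φ(β,γ)`. -/
def InB {V : Type*} (G : SimpleGraph V) (φ : Sym2 V → Fin 4) (e : Sym2 V) : Prop :=
  e ∈ G.edgeSet ∧ φ e = 3 ∧ ∀ u v : V, e = s(u, v) → (twoColour G φ 1 2).Reachable u v

/-- An edge is in `C_φ` when it is coloured `δ` and its ends are joined by a path
of `φ(α,γ)`. -/
def InC {V : Type*} (G : SimpleGraph V) (φ : Sym2 V → Fin 4) (e : Sym2 V) : Prop :=
  e ∈ G.edgeSet ∧ φ e = 3 ∧ ∀ u v : V, e = s(u, v) → (twoColour G φ 0 2).Reachable u v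

/-- The edge set of the odd cycle `C_{A_φ}(e)` associated to an edge `e ∈ A_φ`:
the component of `φ(α,β)` containing the ends of `e`, together with `e`. -/
def assocCycleA {V : Type*} (G : SimpleGraph V) (φ : Sym2 V → Fin 4) (e : Sym2 V) :
    Set (Sym2 V) :=
  insert e {f | f ∈ G.edgeSet ∧ (φ f = 0 ∨ φ f = 1) ∧
    ∃ x, x ∈ f ∧ ∃ y, y ∈ e ∧ (twoColour G φ 0 1).Reachable y x}

/-- The edge set of the odd cycle `C_{B_φ}(e)` associated to an edge `e ∈ B_φ`. -/
def assocCycleB {V : Type*} (G : SimpleGraph V) (φ : Sym2 V → Fin 4) (e : Sym2 V) :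
    Set (Sym2 V) :=
  insert e {f | f ∈ G.edgeSet ∧ (φ f = 1 ∨ φ f = 2) ∧
    ∃ x, x ∈ f ∧ ∃ y, y ∈ e ∧ (twoColour G φ 1 2).Reachable y x}

/-- The edge set of the odd cycle `C_{C_φ}(e)` associated to an edge `e ∈ C_φ`. -/
def assocCycleC {V : Type*} (G : SimpleGraph V) (φ : Sym2 V → Fin 4) (e : Sym2 V) :
    Set (Sym2 V) :=
  insert e {f | f ∈ G.edgeSet ∧ (φ f = 0 ∨ φ f = 2) ∧
    ∃ x, x ∈ f ∧ ∃ y, y ∈ e ∧ (twoColour G φ 0 2).Reachable y x}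

/-- The three sets `A_φ`, `B_φ`, `C_φ`. -/
def colourClass {V : Type*} (G : SimpleGraph V) (φ : Sym2 V → Fin 4) :
    Fin 3 → Set (Sym2 V)
  | 0 => {e | InA G φ e}
  | 1 => {e | InB G φ e}
  | 2 => {e | InC G φ e}

/-- `C` is one of the odd cycles associated to the δ-coloured edge `e`. -/
def IsAssocCycle {V : Type*} (G : SimpleGraph V) (φ : Sym2 V → Fin 4) (e : Sym2 V)
    (C : Set (Sym2 V)) : Prop :=
  (InA G φ e ∧ C = assocCycleA G φ e) ∨
  (InB G φ e ∧ C = assocCycleB G φ e) ∨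
  (InC G φ e ∧ C = assocCycleC G φ e)

end Parsimonious

/-!
Suppose `u` and `v` are not joined in `φ(a,γ)`, where `a ∈ {α, β}`. Since `d(u) = 3` and `u` sees
`α`, `β`, `δ`, the colour `γ` is missing at `u`; since `d(v) = 2` and `v` sees `γ`, `δ`, the colour
`a` is missing at `v`. Swapping `a` and `γ` on the component of `φ(a,γ)` containing `v` leaves the
edges at `u` alone and makes `γ` missing at `v`, so `uv` can then be recoloured `γ`. This gives a
proper colouring with one `δ`-edge fewer, contradicting δ-minimality.
-/

namespace Parsimonious

variable {V : Type*} {G : SimpleGraph V}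

lemma twoColour_adj {φ : Sym2 V → Fin 4} {a c : Fin 4} {x y : V} :
    (twoColour G φ a c).Adj x y ↔ G.Adj x y ∧ (φ s(x, y) = a ∨ φ s(x, y) = c) := by
  simp only [twoColour, fromEdgeSet_adj, Set.mem_ofPred_eq, mem_edgeSet]
  exact ⟨fun h => h.1, fun h => ⟨h, h.1.ne⟩⟩

lemma incident_colour_mem_of_degree_le {α : Type*} [DecidableEq α] {u : V}
    [Fintype (G.neighborSet u)] {φ : Sym2 V → α} {S : Finset α}
    (hS : ∀ c ∈ S, ∃ y, G.Adj u y ∧ φ s(u, y) = c) (hdeg : G.degree u ≤ S.card)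
    {y : V} (hy : G.Adj u y) : φ s(u, y) ∈ S := by
  set colours := (G.neighborFinset u).image fun y => φ s(u, y)
  have hsub : S ⊆ colours := fun c hc => by
    obtain ⟨y, hy, rfl⟩ := hS c hc
    exact Finset.mem_image_of_mem _ ((G.mem_neighborFinset u y).mpr hy)
  have hcard : colours.card ≤ S.card :=
    Finset.card_image_le.trans ((G.card_neighborFinset_eq_degree u).trans_le hdeg)
  rw [Finset.eq_of_subset_of_card_le hsub hcard]
  exact Finset.mem_image_of_mem _ ((G.mem_neighborFinset u y).mpr hy)

lemma ProperOn.update_of_not_incident {α : Type*} [DecidableEq V] {ψ : Sym2 V → α}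
    (hψ : ProperOn G.edgeSet ψ) {u v : V} {c : α}
    (hu : ∀ y, G.Adj u y → y ≠ v → ψ s(u, y) ≠ c)
    (hv : ∀ y, G.Adj v y → y ≠ u → ψ s(v, y) ≠ c) :
    ProperOn G.edgeSet (Function.update ψ s(u, v) c) := by
  have hmissing : ∀ f ∈ G.edgeSet, f ≠ s(u, v) → ∀ w ∈ f, w ∈ s(u, v) → ψ f ≠ c := by
    intro f hf hfe w hwf hwe
    obtain ⟨y, rfl⟩ := Sym2.mem_iff_exists.mp hwf
    rcases Sym2.mem_iff.mp hwe with rfl | rfl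
    · exact hu y hf (by rintro rfl; exact hfe rfl)
    · exact hv y hf (by rintro rfl; exact hfe Sym2.eq_swap)
  intro f₁ h₁ f₂ h₂ hne ⟨w, hw₁, hw₂⟩
  by_cases he₁ : f₁ = s(u, v) <;> by_cases he₂ : f₂ = s(u, v)
  · exact absurd (he₁.trans he₂.symm) hne
  · subst he₁
    rw [Function.update_self, Function.update_of_ne he₂]
    exact (hmissing f₂ h₂ he₂ w hw₂ hw₁).symm
  · subst he₂
    rw [Function.update_self, Function.update_of_ne he₁]
    exact hmissing f₁ h₁ he₁ w hw₁ hw₂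
  · rw [Function.update_of_ne he₁, Function.update_of_ne he₂]
    exact hψ h₁ h₂ hne ⟨w, hw₁, hw₂⟩

lemma mem_pair_of_swap_apply_eq {α : Type*} [DecidableEq α] {a c x y : α}
    (h : Equiv.swap a c x = y) (hxy : x ≠ y) :
    (x = a ∨ x = c) ∧ (y = a ∨ y = c) := by
  subst h
  by_cases hx : x = a ∨ x = c
  · rcases hx with rfl | rfl <;> simp
  · push Not at hx
    exact absurd (Equiv.swap_apply_of_ne_of_ne hx.1 hx.2).symm hxy

/-- Only the edges of the component of `v` in `φ(a,c)` change colour, since `Equiv.swap a c`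
fixes every colour other than `a` and `c`. -/
noncomputable def kempeSwitch (G : SimpleGraph V) (φ : Sym2 V → Fin 4) (a c : Fin 4) (v : V)
    (f : Sym2 V) : Fin 4 :=
  open Classical in
  if ∃ x ∈ f, (twoColour G φ a c).Reachable v x then Equiv.swap a c (φ f) else φ f

section kempeSwitch

variable {φ : Sym2 V → Fin 4} {a c : Fin 4} {v : V}

lemma exists_reachable_iff_of_mem {f : Sym2 V} (hf : f ∈ G.edgeSet)
    (hfc : φ f = a ∨ φ f = c) {w : V} (hw : w ∈ f) :
    (∃ x ∈ f, (twoColour G φ a c).Reachable v x) ↔ (twoColour G φ a c).Reachable v w := by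
  obtain ⟨y, rfl⟩ := Sym2.mem_iff_exists.mp hw
  have hadj : (twoColour G φ a c).Adj w y := twoColour_adj.mpr ⟨hf, hfc⟩
  simp only [Sym2.mem_iff, exists_eq_or_imp, exists_eq_left]
  exact ⟨fun h => h.elim id fun hy => hy.trans hadj.symm.reachable,
    fun h => Or.inl h⟩

lemma kempeSwitch_eq_iff_of_ne {f : Sym2 V} {d : Fin 4} (ha : d ≠ a) (hc : d ≠ c) :
    kempeSwitch G φ a c v f = d ↔ φ f = d := by
  unfold kempeSwitch
  split_ifs
  · rw [Equiv.swap_apply_eq_iff, Equiv.swap_apply_of_ne_of_ne ha hc]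
  · rfl

theorem ProperOn.kempeSwitch (hφ : ProperOn G.edgeSet φ) :
    ProperOn G.edgeSet (kempeSwitch G φ a c v) := by
  intro f₁ h₁ f₂ h₂ hne ⟨w, hw₁, hw₂⟩
  have hφne := hφ h₁ h₂ hne ⟨w, hw₁, hw₂⟩
  have hsame : (φ f₁ = a ∨ φ f₁ = c) → (φ f₂ = a ∨ φ f₂ = c) →
      ((∃ x ∈ f₁, (twoColour G φ a c).Reachable v x) ↔
        ∃ x ∈ f₂, (twoColour G φ a c).Reachable v x) := fun hc₁ hc₂ =>
    (exists_reachable_iff_of_mem h₁ hc₁ hw₁).trans (exists_reachable_iff_of_mem h₂ hc₂ hw₂).symm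
  unfold Parsimonious.kempeSwitch
  split_ifs with s₁ s₂ s₂
  · exact (Equiv.swap a c).injective.ne hφne
  · intro h
    obtain ⟨hc₁, hc₂⟩ := mem_pair_of_swap_apply_eq h hφne
    exact s₂ ((hsame hc₁ hc₂).mp s₁)
  · intro h
    obtain ⟨hc₂, hc₁⟩ := mem_pair_of_swap_apply_eq h.symm hφne.symm
    exact s₁ ((hsame hc₁ hc₂).mpr s₂)
  · exact hφne

end kempeSwitch

lemma IsDeltaMin.ncard_le {φ ψ : Sym2 V → Fin 4} (hφ : IsDeltaMin G φ)
    (hψ : ProperOn G.edgeSet ψ) :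
    {f ∈ G.edgeSet | φ f = 3}.ncard ≤ {f ∈ G.edgeSet | ψ f = 3}.ncard :=
  hφ.2 ▸ Nat.sInf_le ⟨ψ, hψ, rfl⟩

theorem IsDeltaMin.reachable_of_missing [Finite V] {φ : Sym2 V → Fin 4} (hφ : IsDeltaMin G φ)
    {u v : V} (he : G.Adj u v) (hδ : φ s(u, v) = 3) {a c : Fin 4}
    (hu : ∀ y, G.Adj u y → φ s(u, y) ≠ c) (hv : ∀ y, G.Adj v y → φ s(v, y) ≠ a) :
    (twoColour G φ a c).Reachable u v := by
  classical
  by_contra hnot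
  have hc : c ≠ 3 := fun h => hu v he (hδ.trans h.symm)
  have ha : a ≠ 3 := fun h => hv u he.symm (by rw [Sym2.eq_swap, hδ, h])
  set ψ := Function.update (kempeSwitch G φ a c v) s(u, v) c
  have hswitch_u : ∀ y, G.Adj u y → y ≠ v → kempeSwitch G φ a c v s(u, y) ≠ c := by
    intro y hy _ h
    by_cases hr : ∃ x ∈ s(u, y), (twoColour G φ a c).Reachable v x
    · rw [Parsimonious.kempeSwitch, if_pos hr, Equiv.swap_apply_eq_iff,
        Equiv.swap_apply_right] at h
      exact hnot ((exists_reachable_iff_of_mem hy (Or.inl h) (Sym2.mem_mk_left u y)).mp hr).symm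
    · exact hu y hy (by rwa [Parsimonious.kempeSwitch, if_neg hr] at h)
  have hswitch_v : ∀ y, G.Adj v y → y ≠ u → kempeSwitch G φ a c v s(v, y) ≠ c := by
    intro y hy _ h
    rw [Parsimonious.kempeSwitch, if_pos ⟨v, Sym2.mem_mk_left v y, Reachable.refl v⟩,
      Equiv.swap_apply_eq_iff, Equiv.swap_apply_right] at h
    exact hv y hy h
  have hψ : ProperOn G.edgeSet ψ :=
    (hφ.1.kempeSwitch).update_of_not_incident hswitch_u hswitch_v
  have hδψ : {f ∈ G.edgeSet | ψ f = 3} = {f ∈ G.edgeSet | φ f = 3} \ {s(u, v)} := by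
    ext f
    by_cases hf : f = s(u, v)
    · subst hf
      simp [ψ, hc]
    · simp [ψ, kempeSwitch_eq_iff_of_ne ha.symm hc.symm, hf]
  have hlt : {f ∈ G.edgeSet | ψ f = 3}.ncard < {f ∈ G.edgeSet | φ f = 3}.ncard := by
    rw [hδψ]
    exact Set.ncard_sdiff_singleton_lt_of_mem ⟨he, hδ⟩ (Set.toFinite _)
  exact (hφ.ncard_le hψ).not_gt hlt

end Parsimonious

open Parsimonious in
theorem deltaMin_degree_two_in_two_sets_general {V : Type*} [Fintype V] (G : SimpleGraph V)
    [DecidableRel G.Adj] (φ : Sym2 V → Fin 4) (hφ : IsDeltaMin G φ)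
    (u v : V) (he : G.Adj u v) (hδ : φ s(u, v) = 3)
    (hdu : G.degree u = 3) (hdv : G.degree v = 2)
    (hα : ∃ w, G.Adj u w ∧ φ s(u, w) = 0) (hβ : ∃ w, G.Adj u w ∧ φ s(u, w) = 1)
    (hγ : ∃ w, G.Adj v w ∧ φ s(v, w) = 2) :
    (∃ p : (twoColour G φ 0 2).Walk u v, p.IsPath) ∧
    (∃ q : (twoColour G φ 1 2).Walk u v, q.IsPath) := by
  have hcolours_u : ∀ y, G.Adj u y → φ s(u, y) ∈ ({0, 1, 3} : Finset (Fin 4)) :=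
    fun _ => incident_colour_mem_of_degree_le (by simpa using ⟨hα, hβ, ⟨v, he, hδ⟩⟩) hdu.le
  have hcolours_v : ∀ y, G.Adj v y → φ s(v, y) ∈ ({3, 2} : Finset (Fin 4)) := fun _ =>
    incident_colour_mem_of_degree_le
      (by simpa using ⟨⟨u, he.symm, Sym2.eq_swap ▸ hδ⟩, hγ⟩) hdv.le
  have hγ_missing_u : ∀ y, G.Adj u y → φ s(u, y) ≠ 2 := fun y hy h => by
    simpa [h] using hcolours_u y hy
  have hmissing_v : ∀ a : Fin 4, a ≠ 3 → a ≠ 2 → ∀ y, G.Adj v y → φ s(v, y) ≠ a :=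
    fun a h3 h2 y hy h => by simpa [h, h3, h2] using hcolours_v y hy
  exact ⟨(hφ.reachable_of_missing he hδ hγ_missing_u
      (hmissing_v 0 (by decide) (by decide))).exists_isPath,
    (hφ.reachable_of_missing he hδ hγ_missing_u
      (hmissing_v 1 (by decide) (by decide))).exists_isPath⟩

open Parsimonious in
/-- If `e = uv` is coloured `δ`, `d(u) = 3`, `d(v) = 2`, `u` is
incident with edges coloured `α` and `β` and `v` is incident with an edge coloured `γ`,
then the ends of `e` are joined by an alternating path of `φ(α,γ)` and by an
alternating path of `φ(β,γ)`. -/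
theorem deltaMin_degree_two_in_two_sets {V : Type*} [Fintype V] (G : SimpleGraph V)
    [DecidableRel G.Adj] (hconn : G.Connected) (hdeg : G.maxDegree ≤ 3)
    (φ : Sym2 V → Fin 4) (hφ : IsDeltaMin G φ)
    (u v : V) (he : G.Adj u v) (hδ : φ s(u, v) = 3)
    (hdu : G.degree u = 3) (hdv : G.degree v = 2)
    (hα : ∃ w, G.Adj u w ∧ φ s(u, w) = 0) (hβ : ∃ w, G.Adj u w ∧ φ s(u, w) = 1)
    (hγ : ∃ w, G.Adj v w ∧ φ s(v, w) = 2) :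
    (∃ p : (twoColour G φ 0 2).Walk u v, p.IsPath) ∧
    (∃ q : (twoColour G φ 1 2).Walk u v, q.IsPath) :=
  deltaMin_degree_two_in_two_sets_general G φ hφ u v he hδ hdu hdv hα hβ hγ
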